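/- arXiv:2501.16202 — 3 statements merged into one kernel-verified Lean document; each statement's English description precedes it below -/
import Mathlib

section
/- Let A be an odd cluster in T_d, let B be the set induced by A, and let G_A be the subgraph of T_d induced on A ∪ B. Then ξ*(G_A) ≤ STri(A) + DTri(A), where ξ*(G_A) = Σ_{p=3}^d (p−2)·#{vertices of degree p in G_A}. -/
open MeasureTheory

/-- `x` has at least two `G`-neighbors in the set `B`. -/
def TwoNbrsIn {V : Type} (G : SimpleGraph V) (B : Set V) (x : V) : Prop :=
  ∃ y ∈ B, ∃ z ∈ B, y ≠ z ∧ G.Adj x y ∧ G.Adj x z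

/-- `x` is an odd vertex: its graph distance to the fixed root `o` is odd. -/
def IsOddV {V : Type} (G : SimpleGraph V) (o x : V) : Prop := Odd (G.dist o x)

/-- `x` is an even vertex: its graph distance to the fixed root `o` is even. -/
def IsEvenV {V : Type} (G : SimpleGraph V) (o x : V) : Prop := Even (G.dist o x)

/-- `S` is connected with respect to the double-neighbor relation (graph distance 2)
within `S`. -/
def DNConnected {V : Type} (G : SimpleGraph V) (S : Set V) : Prop :=
  ∀ x ∈ S, ∀ y ∈ S,
    Relation.ReflTransGen (fun a b => a ∈ S ∧ b ∈ S ∧ G.dist a b = 2) x y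

/-- An odd cluster: a finite nonempty set of odd vertices, connected under the
double-neighbor relation. -/
def IsOddCluster {V : Type} (G : SimpleGraph V) (o : V) (A : Set V) : Prop :=
  A.Finite ∧ A.Nonempty ∧ (∀ x ∈ A, IsOddV G o x) ∧ DNConnected G A

/-- An even cluster: a finite nonempty set of even vertices, connected under the
double-neighbor relation. -/
def IsEvenCluster {V : Type} (G : SimpleGraph V) (o : V) (A : Set V) : Prop :=
  A.Finite ∧ A.Nonempty ∧ (∀ x ∈ A, IsEvenV G o x) ∧ DNConnected G A

/-- Two vertex sets (of the same parity) are non-adjacent: they are disjoint and no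
pair of points of the two sets is at graph distance 2 (so their graph distance
exceeds 2). -/
def NonAdj {V : Type} (G : SimpleGraph V) (A B : Set V) : Prop :=
  Disjoint A B ∧ ∀ a ∈ A, ∀ b ∈ B, G.dist a b ≠ 2

/-- The neighborhood `N(A)` of a vertex set `A`. -/
def nbhd {V : Type} (G : SimpleGraph V) (A : Set V) : Set V := {y | ∃ x ∈ A, G.Adj x y}

/-- `Prr G A B`: the set of elements of `A` having at least two neighbors in `B`. -/
def Prr {V : Type} (G : SimpleGraph V) (A B : Set V) : Set V := {v ∈ A | TwoNbrsIn G B v}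

/-- The set induced by `B`: vertices outside `B` with at least two neighbors in `B`. -/
def inducedSet {V : Type} (G : SimpleGraph V) (B : Set V) : Set V :=
  {x | x ∉ B ∧ TwoNbrsIn G B x}

/-- `ℬ(A)`: the collection of sets `B ⊆ N(A)` such that no proper subset of `B` has the
same `Prr`-value. -/
def minimalB {V : Type} (G : SimpleGraph V) (A : Set V) : Set (Set V) :=
  {B | B ⊆ nbhd G A ∧ ∀ B' : Set V, B' ⊂ B → Prr G A B' ≠ Prr G A B}

/-- `ℬ(A, C)`: the members of `ℬ(A)` whose `Prr`-value is `C`. -/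
def minimalBC {V : Type} (G : SimpleGraph V) (A C : Set V) : Set (Set V) :=
  {B | B ∈ minimalB G A ∧ Prr G A B = C}

/-- `x` is a type-`p` single trifurcation of `A`: it has exactly `p` neighbors in `A`. -/
def IsSingleTri {V : Type} (G : SimpleGraph V) (A : Set V) (p : ℕ) (x : V) : Prop :=
  (G.neighborSet x ∩ A).ncard = p

/-- `x` is a type-`p` double trifurcation of `A`: there are `p` distinct neighbors of
`x` each having a neighbor in `A \ {x}`. -/
def IsDoubleTri {V : Type} (G : SimpleGraph V) (A : Set V) (p : ℕ) (x : V) : Prop :=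
  ∃ Y : Finset V, Y.card = p ∧ (∀ y ∈ Y, G.Adj x y) ∧
    ∀ y ∈ Y, (G.neighborSet y ∩ (A \ {x})).Nonempty

/-- `STri(A) = Σ_{p=3}^d (p-2) · #{type-p single trifurcations of A}`. -/
noncomputable def STri {V : Type} (G : SimpleGraph V) (d : ℕ) (A : Set V) : ℕ :=
  ∑ p ∈ Finset.Icc 3 d, (p - 2) * {x : V | IsSingleTri G A p x}.ncard

/-- `DTri(A) = Σ_{p=3}^d (p-2) · #{type-p double trifurcations of A}`. -/
noncomputable def DTri {V : Type} (G : SimpleGraph V) (d : ℕ) (A : Set V) : ℕ :=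
  ∑ p ∈ Finset.Icc 3 d, (p - 2) * {x : V | IsDoubleTri G A p x}.ncard

/-- The degree of `x` in the subgraph of `G` induced on the vertex set `S`. -/
noncomputable def degIn {V : Type} (G : SimpleGraph V) (S : Set V) (x : V) : ℕ :=
  {y ∈ S | G.Adj x y}.ncard

/-- `ξ*(H)` for the subgraph `H` of `G` induced on the vertex set `S`:
`Σ_{p=3}^d (p-2) · #{vertices of degree p in H}`. -/
noncomputable def xiStarSub {V : Type} (G : SimpleGraph V) (d : ℕ) (S : Set V) : ℕ :=
  ∑ p ∈ Finset.Icc 3 d, (p - 2) * {x ∈ S | degIn G S x = p}.ncard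


section AuxProofs

open SimpleGraph

variable {V : Type} {G : SimpleGraph V} {o : V}

/-- In an acyclic graph, every path realizes the distance between its endpoints. -/
lemma path_len_eq_dist (hacyc : G.IsAcyclic) {u v : V} {p : G.Walk u v}
    (hp : p.IsPath) : p.length = G.dist u v := by
  obtain ⟨q, hq, hql⟩ := p.reachable.exists_path_of_dist
  have huniq := (SimpleGraph.isAcyclic_iff_path_unique.mp hacyc) ⟨p, hp⟩ ⟨q, hq⟩
  have : p = q := congrArg Subtype.val huniq
  rw [this, hql]

/-- In a connected acyclic graph, an edge changes the distance to a fixed root by one. -/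
lemma adj_dist_eq (hconn : G.Connected) (hacyc : G.IsAcyclic) {x y : V}
    (h : G.Adj x y) :
    G.dist o y = G.dist o x + 1 ∨ G.dist o x = G.dist o y + 1 := by
  classical
  obtain ⟨p, hp, hpl⟩ := hconn.exists_path_of_dist o x
  by_cases hy : y ∈ p.support
  · right
    have ht : (p.takeUntil y hy).IsPath := hp.takeUntil hy
    have hdrop : (p.dropUntil y hy).IsPath := hp.dropUntil hy
    have hne : x ≠ y := G.ne_of_adj h
    have hcons : (SimpleGraph.Walk.cons h.symm .nil : G.Walk y x).IsPath := by
      simp [SimpleGraph.Walk.isPath_def, hne.symm]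
    have heq : p.dropUntil y hy = SimpleGraph.Walk.cons h.symm .nil := by
      have := (SimpleGraph.isAcyclic_iff_path_unique.mp hacyc) ⟨_, hdrop⟩ ⟨_, hcons⟩
      exact congrArg Subtype.val this
    have hlen := congrArg SimpleGraph.Walk.length (p.take_spec hy)
    rw [SimpleGraph.Walk.length_append, heq] at hlen
    simp only [SimpleGraph.Walk.length_cons, SimpleGraph.Walk.length_nil] at hlen
    have h1 : (p.takeUntil y hy).length = G.dist o y := path_len_eq_dist hacyc ht
    omega
  · left
    have hp' : (p.concat h).IsPath := by
      have : (p.concat h).reverse.IsPath := by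
        rw [SimpleGraph.Walk.reverse_concat]
        refine hp.reverse.cons ?_
        rw [SimpleGraph.Walk.support_reverse, List.mem_reverse]
        exact hy
      have h' := this.reverse; rwa [SimpleGraph.Walk.reverse_reverse] at h'
    have h2 := path_len_eq_dist hacyc hp'
    rw [SimpleGraph.Walk.length_concat, hpl] at h2
    omega

/-- Adjacent vertices have opposite parity of distance to the root. -/
lemma adj_parity (hconn : G.Connected) (hacyc : G.IsAcyclic) {x y : V}
    (h : G.Adj x y) : Odd (G.dist o x) ↔ Even (G.dist o y) := by
  rcases adj_dist_eq (o := o) hconn hacyc h with h1 | h1 <;>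
    · rw [Nat.odd_iff, Nat.even_iff]; omega

lemma nbr_finite (d : ℕ) (hd : d ≠ 0) (hreg : ∀ v : V, (G.neighborSet v).ncard = d)
    (v : V) : (G.neighborSet v).Finite :=
  Set.finite_of_ncard_ne_zero (by rw [hreg v]; exact hd)

lemma nbhd_finite (d : ℕ) (hd : d ≠ 0) (hreg : ∀ v : V, (G.neighborSet v).ncard = d)
    {A : Set V} (hA : A.Finite) : (nbhd G A).Finite := by
  have hsub : nbhd G A ⊆ ⋃ x ∈ A, G.neighborSet x := by
    rintro y ⟨x, hx, hxy⟩
    exact Set.mem_biUnion hx hxy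
  exact ((hA.biUnion fun x _ => nbr_finite d hd hreg x)).subset hsub

end AuxProofs

/-- **Lemma.** On the infinite `d`-regular tree, for an odd cluster `A` with induced
set `B` and `G_A` the subgraph induced on `A ∪ B`, one has
`ξ*(G_A) ≤ STri(A) + DTri(A)`. -/
theorem xiStar_le_tri (d : ℕ) (hd : 3 ≤ d)
    (V : Type) (G : SimpleGraph V) (o : V)
    (hconn : G.Connected) (hacyc : G.IsAcyclic)
    (hreg : ∀ v : V, (G.neighborSet v).ncard = d)
    (A : Set V) (hA : IsOddCluster G o A) :
    xiStarSub G d (A ∪ inducedSet G A) ≤ STri G d A + DTri G d A := by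
  classical
  obtain ⟨hAfin, hAne, hAodd, hAconn⟩ := hA
  set B := inducedSet G A with hBdef
  set S := A ∪ B with hSdef
  have hd0 : d ≠ 0 := by omega
  have hNfin : (nbhd G A).Finite := nbhd_finite d hd0 hreg hAfin
  have hNNfin : (nbhd G (nbhd G A)).Finite := nbhd_finite d hd0 hreg hNfin
  -- membership facts
  have hBsub : B ⊆ nbhd G A := by
    rintro x ⟨hxA, y, hyA, z, hzA, hyz, hxy, hxz⟩
    exact ⟨y, hyA, hxy.symm⟩
  have hBeven : ∀ x ∈ B, Even (G.dist o x) := by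
    rintro x ⟨hxA, y, hyA, z, hzA, hyz, hxy, hxz⟩
    exact (adj_parity (o := o) hconn hacyc hxy.symm).mp (hAodd y hyA)
  have hAB : ∀ x ∈ A, x ∉ B := fun x hx hxB => hxB.1 hx
  have hBA : ∀ x ∈ B, x ∉ A := fun x hx => hx.1
  -- case x ∈ B: single trifurcation
  have hsingle : ∀ p, ∀ x ∈ B, degIn G S x = p → IsSingleTri G A p x := by
    intro p x hxB hdeg
    have hset : {y ∈ S | G.Adj x y} = G.neighborSet x ∩ A := by
      ext y
      constructor
      · rintro ⟨hyS, hxy⟩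
        refine ⟨hxy, ?_⟩
        rcases hyS with hyA | hyB
        · exact hyA
        · exfalso
          have h1 := (adj_parity (o := o) hconn hacyc hxy).mpr (hBeven y hyB)
          have h2 := hBeven x hxB
          exact (Nat.not_odd_iff_even.mpr h2) h1
      · rintro ⟨hxy, hyA⟩
        exact ⟨Or.inl hyA, hxy⟩
    unfold IsSingleTri
    rw [← hset]
    exact hdeg
  -- case x ∈ A: double trifurcation
  have hdouble : ∀ p, ∀ x ∈ A, degIn G S x = p → IsDoubleTri G A p x := by
    intro p x hxA hdeg
    have hTfin : {y ∈ S | G.Adj x y}.Finite :=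
      (nbr_finite d hd0 hreg x).subset (fun y hy => hy.2)
    refine ⟨hTfin.toFinset, ?_, ?_, ?_⟩
    · rw [← Set.ncard_eq_toFinset_card _ hTfin]; exact hdeg
    · intro y hy
      exact ((hTfin.mem_toFinset).mp hy).2
    · intro y hy
      obtain ⟨hyS, hxy⟩ := (hTfin.mem_toFinset).mp hy
      have hyB : y ∈ B := by
        rcases hyS with hyA | hyB
        · exfalso
          have h1 := (adj_parity (o := o) hconn hacyc hxy).mp (hAodd x hxA)
          exact (Nat.not_odd_iff_even.mpr h1) (hAodd y hyA)
        · exact hyB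
      obtain ⟨hyA, a, haA, b, hbA, hab, hya, hyb⟩ := hyB
      by_cases hax : a = x
      · exact ⟨b, hyb, hbA, by simp [← hax]; exact fun hba => hab hba.symm⟩
      · exact ⟨a, hya, haA, hax⟩
  -- finiteness of trifurcation sets
  have hSfinSet : ∀ p ∈ Finset.Icc 3 d, {x : V | IsSingleTri G A p x}.Finite := by
    intro p hp
    rw [Finset.mem_Icc] at hp
    refine hNfin.subset ?_
    intro x hx
    have : (G.neighborSet x ∩ A).ncard ≠ 0 := by rw [hx]; omega
    obtain ⟨y, hy⟩ := Set.nonempty_of_ncard_ne_zero this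
    exact ⟨y, hy.2, hy.1.symm⟩
  have hDfinSet : ∀ p ∈ Finset.Icc 3 d, {x : V | IsDoubleTri G A p x}.Finite := by
    intro p hp
    rw [Finset.mem_Icc] at hp
    refine hNNfin.subset ?_
    rintro x ⟨Y, hYcard, hYadj, hYnbr⟩
    have hYne : Y.Nonempty := Finset.card_pos.mp (by omega)
    obtain ⟨y, hy⟩ := hYne
    obtain ⟨a, haN, haA, _⟩ := hYnbr y hy
    exact ⟨y, ⟨a, haA, haN.symm⟩, (hYadj y hy).symm⟩
  -- main estimate
  have hSTriD : STri G d A + DTri G d A =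
      ∑ p ∈ Finset.Icc 3 d, ((p - 2) * {x : V | IsSingleTri G A p x}.ncard
        + (p - 2) * {x : V | IsDoubleTri G A p x}.ncard) := by
    rw [STri, DTri, ← Finset.sum_add_distrib]
  rw [hSTriD, xiStarSub]
  apply Finset.sum_le_sum
  intro p hp
  rw [← Nat.mul_add]
  apply Nat.mul_le_mul_left
  calc {x ∈ S | degIn G S x = p}.ncard
      ≤ ({x : V | IsSingleTri G A p x} ∪ {x : V | IsDoubleTri G A p x}).ncard := by
        apply Set.ncard_le_ncard
        · rintro x ⟨hxS, hdeg⟩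
          rcases hxS with hxA | hxB
          · exact Or.inr (hdouble p x hxA hdeg)
          · exact Or.inl (hsingle p x hxB hdeg)
        · exact (hSfinSet p hp).union (hDfinSet p hp)
    _ ≤ {x : V | IsSingleTri G A p x}.ncard + {x : V | IsDoubleTri G A p x}.ncard :=
        Set.ncard_union_le _ _
end

section
/- Let B be an even cluster in T_d, let C be the set induced by B, and let D be the set induced by C. Then D ⊆ B. -/
open MeasureTheory

/-!
Let `C` be the set induced by `B`, and suppose `x ∉ B ∪ C` has two neighbors `y ≠ z` in `C`; pick
neighbors `b` of `y` and `c` of `z` in `B`. Double neighbors in `B` are joined through a common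
neighbor, which lies in `B` or in `C`; so the double-neighbor connectivity of `B` yields a walk from
`b` to `c` inside `B ∪ C`. Prolonged to a walk from `y` to `z`, it still avoids `x`, whereas in a
forest every walk between two neighbors of `x` passes through `x`.
-/

namespace SimpleGraph

variable {V : Type} {G : SimpleGraph V}

lemma edist_eq_two_of_dist_eq_two {u v : V} (h : G.dist u v = 2) : G.edist u v = 2 := by
  rw [← (Reachable.of_dist_ne_zero (h ▸ two_ne_zero)).coe_dist_eq_edist, h]
  rfl

lemma IsAcyclic.mem_support_of_adj_of_adj (hacyc : G.IsAcyclic) {x y z : V}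
    (hxy : G.Adj x y) (hxz : G.Adj x z) (hyz : y ≠ z) (p : G.Walk y z) : x ∈ p.support := by
  classical
  have hpath : (Walk.cons hxy.symm (Walk.cons hxz Walk.nil)).IsPath := by
    simp [Walk.isPath_def, hxy.ne', hyz, hxz.ne]
  have hbypass : p.bypass = Walk.cons hxy.symm (Walk.cons hxz Walk.nil) :=
    congrArg Subtype.val ((hacyc.subsingleton_path y z).elim ⟨_, p.bypass_isPath⟩ ⟨_, hpath⟩)
  exact p.support_bypass_subset_support (by simp [hbypass])

lemma exists_walk_support_subset_union_inducedSet {B : Set V} {b b' : V}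
    (h : Relation.ReflTransGen (fun a c => a ∈ B ∧ c ∈ B ∧ G.dist a c = 2) b b') (hb : b ∈ B) :
    ∃ w : G.Walk b b', ∀ v ∈ w.support, v ∈ B ∪ inducedSet G B := by
  induction h with
  | refl => exact ⟨Walk.nil, by simp [hb]⟩
  | @tail c c' _ hstep ih =>
    obtain ⟨w, hw⟩ := ih
    obtain ⟨hc, hc', hdist⟩ := hstep
    obtain ⟨hcc', -, m, hcommon⟩ := edist_eq_two_iff.mp (edist_eq_two_of_dist_eq_two hdist)
    obtain ⟨hcm, hc'm⟩ := G.mem_commonNeighbors.mp hcommon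
    have hm : m ∈ B ∪ inducedSet G B := by
      by_cases hmB : m ∈ B
      · exact Or.inl hmB
      · exact Or.inr ⟨hmB, c, hc, c', hc', hcc', hcm.symm, hc'm.symm⟩
    refine ⟨w.append (Walk.cons hcm (Walk.cons hc'm.symm Walk.nil)), fun v hv => ?_⟩
    simp only [Walk.support_append, Walk.support_cons, Walk.support_nil, List.tail_cons,
      List.mem_append, List.mem_cons, List.not_mem_nil, or_false] at hv
    rcases hv with hv | rfl | rfl
    exacts [hw v hv, hm, Or.inl hc']

end SimpleGraph

open SimpleGraph

theorem induced_induced_subset_general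
    (V : Type) (G : SimpleGraph V) (o : V)
    (hacyc : G.IsAcyclic)
    (B : Set V) (hB : IsEvenCluster G o B) :
    inducedSet G (inducedSet G B) ⊆ B := by
  rintro x ⟨hxC, y, ⟨hyB, b, hb, -, -, -, hyb, -⟩, z, ⟨hzB, c, hc, -, -, -, hzc, -⟩, hyz, hxy, hxz⟩
  by_contra hxB
  obtain ⟨w, hw⟩ := exists_walk_support_subset_union_inducedSet (hB.2.2.2 b hb c hc) hb
  have hx := hacyc.mem_support_of_adj_of_adj hxy hxz hyz ((Walk.cons hyb w).concat hzc.symm)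
  simp only [Walk.support_concat, Walk.support_cons, List.mem_cons, List.mem_append,
    List.not_mem_nil, or_false] at hx
  rcases hx with (rfl | hx) | rfl
  · exact hxy.ne rfl
  · exact (hw x hx).elim hxB hxC
  · exact hxz.ne rfl

/-- **Lemma.** On the infinite `d`-regular tree, if `B` is an even cluster, `C` the set
induced by `B`, and `D` the set induced by `C`, then `D ⊆ B`. -/
theorem induced_induced_subset (d : ℕ) (hd : 3 ≤ d)
    (V : Type) (G : SimpleGraph V) (o : V)
    (hconn : G.Connected) (hacyc : G.IsAcyclic)
    (hreg : ∀ v : V, (G.neighborSet v).ncard = d)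
    (B : Set V) (hB : IsEvenCluster G o B) :
    inducedSet G (inducedSet G B) ⊆ B :=
  induced_induced_subset_general V G o hacyc B hB
end

section
/- Let A be an odd line in T_d with n vertices, i.e., an odd cluster whose vertices can be labelled v₁, …, v_n so that dist(v_i, v_{i+1}) = 2 for 1 ≤ i ≤ n−1 and these are exactly the double-neighbor adjacencies within A; define the order of v_i to be i and the order of a nonempty subset of A to be the maximal index of its elements. For nonnegative integers r, m, let 𝒞̃(A, r, m) be the collection of sequences (C₁, …, C_r) of pairwise disjoint odd clusters such that each C_i ⊆ A, Σ_{i=1}^r |C_i| = m, and the orders of C₁, …, C_r are strictly increasing. Then |𝒞̃(A, r, m)| ≤ 2 · C(m−1, r−1) · C(n−m+r, r), where C(·,·) denotes the binomial coefficient (equal to 0 when the lower entry exceeds the upper entry, with C(m−1, r−1) interpreted as 1 when m = 0 and r = 0). -/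
open MeasureTheory

/-- Binomial coefficient for integer arguments, with the conventions: the usual
binomial coefficient when `0 ≤ b ≤ a`; `0` when `b ≥ 0` and `a < b`; and the indicator
`1_{a = b}` when `b < 0`. -/
def binomZ (a b : ℤ) : ℕ :=
  if b < 0 then (if a = b then 1 else 0)
  else if a < b then 0
  else Nat.choose a.toNat b.toNat

/-- `v` labels an odd line with `n` vertices: the labelling is injective, all vertices
are odd, and the double-neighbor adjacencies among the labelled vertices are exactly
the consecutive pairs. -/
def IsOddLine {V : Type} (G : SimpleGraph V) (o : V) (n : ℕ) (v : Fin n → V) : Prop :=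
  Function.Injective v ∧ (∀ i, IsOddV G o (v i)) ∧
    ∀ i j : Fin n, G.dist (v i) (v j) = 2 ↔ ((i : ℤ) - j = 1 ∨ (j : ℤ) - i = 1)

/-- The order of a subset of an odd line labelled by `v`: the maximal label index of
its elements. -/
noncomputable def lineOrd {V : Type} {n : ℕ} (v : Fin n → V) (X : Set V) : ℕ :=
  sSup ((fun i : Fin n => (i : ℕ)) '' (v ⁻¹' X))

/-- `𝒞̃(A, r, m)` for the odd line `A = range v`: sequences `(C₁, …, C_r)` of pairwise
disjoint odd clusters contained in `A`, of total size `m`, with strictly increasing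
orders. -/
def tildeC {V : Type} (G : SimpleGraph V) (o : V) {n : ℕ} (v : Fin n → V)
    (r m : ℕ) : Set (Fin r → Set V) :=
  {C | (∀ i, IsOddCluster G o (C i) ∧ C i ⊆ Set.range v) ∧
    (∀ i j, i ≠ j → Disjoint (C i) (C j)) ∧
    (∑ i, (C i).ncard) = m ∧
    ∀ i j : Fin r, i < j → lineOrd v (C i) < lineOrd v (C j)}

lemma aux_cluster_interval {V : Type} {G : SimpleGraph V} {o : V} {n : ℕ} {v : Fin n → V}
    (hline : IsOddLine G o n v) {C : Set V} (hC : IsOddCluster G o C)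
    (hsub : C ⊆ Set.range v) :
    ∃ a b : ℕ, a ≤ b ∧ b < n ∧ ∀ k : Fin n, v k ∈ C ↔ a ≤ (k : ℕ) ∧ (k : ℕ) ≤ b := by
  obtain ⟨hinj, -, hdist⟩ := hline
  obtain ⟨hfin, ⟨x0, hx0⟩, -, hdn⟩ := hC
  have key : ∀ (p q : V),
      Relation.ReflTransGen (fun a b => a ∈ C ∧ b ∈ C ∧ G.dist a b = 2) p q →
      p ∈ C → ∀ (ip iq k : Fin n), v ip = p → v iq = q →
        (((ip : ℕ) ≤ k ∧ (k : ℕ) ≤ iq) ∨ ((iq : ℕ) ≤ k ∧ (k : ℕ) ≤ ip)) → v k ∈ C := by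
    intro p q hpq
    induction hpq with
    | refl =>
      intro hp ip iq k hip hiq hk
      have h1 : ip = iq := hinj (hip.trans hiq.symm)
      subst h1
      have h2 : k = ip := by
        apply Fin.ext
        omega
      subst h2
      rw [hip]; exact hp
    | @tail b c hab hbc ih =>
      intro hp ip iq k hip hiq hk
      obtain ⟨hbC, hcC, hd⟩ := hbc
      obtain ⟨ib, hib⟩ := hsub hbC
      obtain ⟨ic, hic⟩ := hsub hcC
      have hd2 : ((ib : ℤ) - ic = 1 ∨ (ic : ℤ) - ib = 1) := by
        apply (hdist ib ic).1
        rw [hib, hic]; exact hd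
      have hiqc : iq = ic := hinj (hiq.trans hic.symm)
      subst hiqc
      by_cases hkc : k = iq
      · subst hkc; rw [hic]; exact hcC
      · have hkc' : (k : ℕ) ≠ (iq : ℕ) := fun h => hkc (Fin.ext h)
        exact ih hp ip ib k hip hib (by omega)
  classical
  have hne : (Finset.univ.filter fun k : Fin n => v k ∈ C).Nonempty := by
    obtain ⟨i0, hi0⟩ := hsub hx0
    exact ⟨i0, by simp [hi0, hx0]⟩
  set S := Finset.univ.filter fun k : Fin n => v k ∈ C with hS
  refine ⟨(S.min' hne : Fin n), (S.max' hne : Fin n), ?_, (S.max' hne).isLt, ?_⟩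
  · exact Fin.le_iff_val_le_val.1 (S.min'_le _ (S.max'_mem hne))
  · intro k
    constructor
    · intro hk
      have hkS : k ∈ S := by simp [hS, hk]
      exact ⟨Fin.le_iff_val_le_val.1 (S.min'_le _ hkS), Fin.le_iff_val_le_val.1 (S.le_max' _ hkS)⟩
    · rintro ⟨h1, h2⟩
      have hmin : v (S.min' hne) ∈ C := by
        have := S.min'_mem hne; simp [hS] at this; exact this
      have hmax : v (S.max' hne) ∈ C := by
        have := S.max'_mem hne; simp [hS] at this; exact this
      exact key _ _ (hdn _ hmin _ hmax) hmin _ _ k rfl rfl (Or.inl ⟨h1, h2⟩)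

def encL (r : ℕ) (a b : Fin r → ℕ) (k : ℕ) : ℕ :=
  if h : k < r then b ⟨k, h⟩ - a ⟨k, h⟩ + 1 else 0

def encQ (r : ℕ) (a b : Fin r → ℕ) (k : ℕ) : ℕ :=
  ∑ j ∈ Finset.range k, encL r a b j

def encA (r : ℕ) (a : Fin r → ℕ) (k : ℕ) : ℕ :=
  if h : k < r then a ⟨k, h⟩ else 0

structure GoodSys (r m n : ℕ) (a b : Fin r → ℕ) : Prop where
  hab : ∀ i, a i ≤ b i
  hbn : ∀ i, b i < n
  hsum : (∑ i, (b i - a i + 1)) = m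
  hsep : ∀ i j : Fin r, i < j → b i < a j

lemma aux_chain (f : ℕ → ℕ) (r : ℕ) (h : ∀ k, k + 1 < r → f k < f (k + 1)) :
    ∀ i j, i < j → j < r → f i < f j := by
  intro i j hij hjr
  induction j with
  | zero => omega
  | succ j ih =>
    rcases Nat.lt_or_ge i j with h' | h'
    · exact (ih h' (by omega)).trans (h j hjr)
    · have : i = j := by omega
      subst this; exact h i hjr

namespace GoodSys

variable {r m n : ℕ} {a b : Fin r → ℕ}

lemma Qr (h : GoodSys r m n a b) : encQ r a b r = m := by
  rw [← h.hsum, encQ, ← Fin.sum_univ_eq_sum_range]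
  apply Finset.sum_congr rfl
  intro i _
  simp [encL, i.isLt]

lemma Lpos {k : ℕ} (hk : k < r) : 1 ≤ encL r a b k := by
  simp [encL, hk]

lemma Qsucc (k : ℕ) : encQ r a b (k + 1) = encQ r a b k + encL r a b k :=
  Finset.sum_range_succ _ _

lemma Astep (h : GoodSys r m n a b) {k : ℕ} (hk : k + 1 < r) :
    encA r a k + encL r a b k ≤ encA r a (k + 1) := by
  have hk' : k < r := by omega
  have h1 := h.hsep ⟨k, hk'⟩ ⟨k + 1, hk⟩ (by simp [Fin.lt_iff_val_lt_val])
  have h2 := h.hab ⟨k, hk'⟩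
  simp only [encA, encL, dif_pos hk, dif_pos hk']
  omega

lemma Q_le_A (h : GoodSys r m n a b) : ∀ k, k < r → encQ r a b k ≤ encA r a k := by
  intro k
  induction k with
  | zero => intro _; simp [encQ]
  | succ k ih =>
    intro hk
    rw [Qsucc]
    exact le_trans (by have := ih (by omega); omega) (h.Astep hk)

lemma Qlower (h : GoodSys r m n a b) : ∀ k, k ≤ r → k ≤ encQ r a b k := by
  intro k
  induction k with
  | zero => intro _; omega
  | succ k ih =>
    intro hk
    rw [Qsucc]
    have h1 : 1 ≤ encL r a b k := Lpos (by omega)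
    have := ih (by omega)
    omega

lemma Qupper (h : GoodSys r m n a b) : ∀ j k, k + j = r → encQ r a b k + j ≤ m := by
  intro j
  induction j with
  | zero =>
    intro k hk
    rw [show k = r by omega, h.Qr]
    omega
  | succ j ih =>
    intro k hk
    have h1 := ih (k + 1) (by omega)
    have h2 := Qsucc (r := r) (a := a) (b := b) k
    have h3 : 1 ≤ encL r a b k := Lpos (by omega)
    omega

lemma Aupper (h : GoodSys r m n a b) :
    ∀ j k, k + j + 1 = r → encA r a k + (m - encQ r a b k) ≤ n := by
  intro j
  induction j with
  | zero =>
    intro k hk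
    have hk' : k < r := by omega
    have h0 : encQ r a b (k + 1) = m := by rw [show k + 1 = r by omega, h.Qr]
    have h1 := Qsucc (r := r) (a := a) (b := b) k
    have h2 : encL r a b k = b ⟨k, hk'⟩ - a ⟨k, hk'⟩ + 1 := by simp [encL, hk']
    have h3 : encA r a k = a ⟨k, hk'⟩ := by simp [encA, hk']
    have h4 := h.hab ⟨k, hk'⟩
    have h5 := h.hbn ⟨k, hk'⟩
    omega
  | succ j ih =>
    intro k hk
    have h7 := ih (k + 1) (by omega)
    have h1 := Qsucc (r := r) (a := a) (b := b) k
    have hstep := h.Astep (show k + 1 < r by omega)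
    have h8 := h.Qupper (j + 1) (k + 1) (by omega)
    omega

end GoodSys

lemma abstract_count {r m n : ℕ} (hr : 1 ≤ r) (hrm : r ≤ m) (hmn : m ≤ n)
    (S : Set ((Fin r → ℕ) × (Fin r → ℕ)))
    (hS : ∀ p ∈ S, GoodSys r m n p.1 p.2) :
    S.ncard ≤ Nat.choose (m - 1) (r - 1) * Nat.choose (n - m + r) r := by
  classical
  set M := m - 1 with hM
  set N := n - m + r with hN
  have hNpos : 0 < N := by omega
  -- encoding functions
  set fF : ((Fin r → ℕ) × (Fin r → ℕ)) → Fin (r - 1) → Fin M :=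
    fun p i => ⟨(encQ r p.1 p.2 ((i : ℕ) + 1) - 1) % M,
      Nat.mod_lt _ (by have := i.isLt; omega)⟩ with hfF
  set gF : ((Fin r → ℕ) × (Fin r → ℕ)) → Fin r → Fin N :=
    fun p i => ⟨(encA r p.1 (i : ℕ) + (i : ℕ) - encQ r p.1 p.2 (i : ℕ)) % N,
      Nat.mod_lt _ hNpos⟩ with hgF
  set F : ((Fin r → ℕ) × (Fin r → ℕ)) → Finset (Fin M) × Finset (Fin N) :=
    fun p => (Finset.image (fF p) Finset.univ, Finset.image (gF p) Finset.univ) with hF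
  set T : Set (Finset (Fin M) × Finset (Fin N)) :=
    {q | q.1.card = r - 1 ∧ q.2.card = r} with hT
  -- facts about fF, gF values for good systems
  have hfval : ∀ p ∈ S, ∀ i : Fin (r - 1),
      (fF p i : ℕ) = encQ r p.1 p.2 ((i : ℕ) + 1) - 1 ∧
      encQ r p.1 p.2 ((i : ℕ) + 1) - 1 < M ∧ 1 ≤ encQ r p.1 p.2 ((i : ℕ) + 1) := by
    intro p hp i
    have hg := hS p hp
    have h1 : encQ r p.1 p.2 ((i : ℕ) + 1) + (r - ((i : ℕ) + 1)) ≤ m :=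
      hg.Qupper _ _ (by have := i.isLt; omega)
    have h2 : (i : ℕ) + 1 ≤ encQ r p.1 p.2 ((i : ℕ) + 1) :=
      hg.Qlower _ (by have := i.isLt; omega)
    have h3 : encQ r p.1 p.2 ((i : ℕ) + 1) - 1 < M := by
      have := i.isLt; omega
    exact ⟨by simp [hfF, Nat.mod_eq_of_lt h3], h3, by omega⟩
  have hgval : ∀ p ∈ S, ∀ i : Fin r,
      (gF p i : ℕ) = encA r p.1 (i : ℕ) + (i : ℕ) - encQ r p.1 p.2 (i : ℕ) ∧
      encA r p.1 (i : ℕ) + (i : ℕ) - encQ r p.1 p.2 (i : ℕ) < N ∧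
      encQ r p.1 p.2 (i : ℕ) ≤ encA r p.1 (i : ℕ) := by
    intro p hp i
    have hg := hS p hp
    have h1 : encA r p.1 (i : ℕ) + (m - encQ r p.1 p.2 (i : ℕ)) ≤ n :=
      hg.Aupper (r - 1 - (i : ℕ)) _ (by have := i.isLt; omega)
    have h2 : encQ r p.1 p.2 (i : ℕ) ≤ encA r p.1 (i : ℕ) := hg.Q_le_A _ i.isLt
    have h3 : encQ r p.1 p.2 (i : ℕ) + (r - (i : ℕ)) ≤ m :=
      hg.Qupper _ _ (by have := i.isLt; omega)
    have h4 : encA r p.1 (i : ℕ) + (i : ℕ) - encQ r p.1 p.2 (i : ℕ) < N := by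
      have := i.isLt; omega
    exact ⟨by simp [hgF, Nat.mod_eq_of_lt h4], h4, h2⟩
  -- strict monotonicity
  have hfmono : ∀ p ∈ S, StrictMono (fF p) := by
    intro p hp i j hij
    have hg := hS p hp
    have hQ : encQ r p.1 p.2 ((i : ℕ) + 1) < encQ r p.1 p.2 ((j : ℕ) + 1) := by
      apply aux_chain (encQ r p.1 p.2) r _ ((i : ℕ) + 1) ((j : ℕ) + 1)
        (by exact_mod_cast Nat.succ_lt_succ hij) (by have := j.isLt; omega)
      intro k hk
      have := GoodSys.Qsucc (r := r) (a := p.1) (b := p.2) k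
      have := GoodSys.Lpos (r := r) (a := p.1) (b := p.2) (show k < r by omega)
      omega
    have h1 := hfval p hp i
    have h2 := hfval p hp j
    rw [Fin.lt_iff_val_lt_val, h1.1, h2.1]
    omega
  have hgmono : ∀ p ∈ S, StrictMono (gF p) := by
    intro p hp i j hij
    have hg := hS p hp
    have hGN : encA r p.1 (i : ℕ) + (i : ℕ) - encQ r p.1 p.2 (i : ℕ) <
        encA r p.1 (j : ℕ) + (j : ℕ) - encQ r p.1 p.2 (j : ℕ) := by
      apply aux_chain (fun k => encA r p.1 k + k - encQ r p.1 p.2 k) r _ (i : ℕ) (j : ℕ)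
        (by exact_mod_cast hij) j.isLt
      intro k hk
      have h1 := hg.Astep hk
      have h2 := GoodSys.Qsucc (r := r) (a := p.1) (b := p.2) k
      have h3 := hg.Q_le_A k (by omega)
      have h4 := hg.Q_le_A (k + 1) hk
      omega
    have h1 := hgval p hp i
    have h2 := hgval p hp j
    rw [Fin.lt_iff_val_lt_val, h1.1, h2.1]
    exact hGN
  -- maps into T
  have hmaps : ∀ p ∈ S, F p ∈ T := by
    intro p hp
    constructor
    · rw [hF]
      simp only []
      rw [Finset.card_image_of_injective _ (hfmono p hp).injective, Finset.card_univ,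
        Fintype.card_fin]
    · rw [hF]
      simp only []
      rw [Finset.card_image_of_injective _ (hgmono p hp).injective, Finset.card_univ,
        Fintype.card_fin]
  -- injectivity
  have hinj : Set.InjOn F S := by
    intro p hp p' hp' heq
    have hg := hS p hp
    have hg' := hS p' hp'
    have hcards : (Finset.image (fF p) Finset.univ).card = r - 1 := (hmaps p hp).1
    have heq1 : Finset.image (fF p) Finset.univ = Finset.image (fF p') Finset.univ :=
      congrArg Prod.fst heq
    have heq2 : Finset.image (gF p) Finset.univ = Finset.image (gF p') Finset.univ :=
      congrArg Prod.snd heq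
    have hfeq : fF p = fF p' := by
      have hcards' : (Finset.image (fF p') Finset.univ).card = r - 1 := (hmaps p' hp').1
      have e1 := Finset.orderEmbOfFin_unique hcards' (f := fF p)
        (fun i => heq1 ▸ Finset.mem_image_of_mem _ (Finset.mem_univ i)) (hfmono p hp)
      have e2 := Finset.orderEmbOfFin_unique hcards' (f := fF p')
        (fun i => Finset.mem_image_of_mem _ (Finset.mem_univ i)) (hfmono p' hp')
      exact e1.trans e2.symm
    have hgeq : gF p = gF p' := by
      have hcg : (Finset.image (gF p) Finset.univ).card = r := (hmaps p hp).2
      have hcg' : (Finset.image (gF p') Finset.univ).card = r := (hmaps p' hp').2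
      have e1 := Finset.orderEmbOfFin_unique hcg' (f := gF p)
        (fun i => heq2 ▸ Finset.mem_image_of_mem _ (Finset.mem_univ i)) (hgmono p hp)
      have e2 := Finset.orderEmbOfFin_unique hcg' (f := gF p')
        (fun i => Finset.mem_image_of_mem _ (Finset.mem_univ i)) (hgmono p' hp')
      exact e1.trans e2.symm
    -- recover Q
    have hQeq : ∀ k, k ≤ r → encQ r p.1 p.2 k = encQ r p'.1 p'.2 k := by
      intro k hk
      rcases Nat.eq_zero_or_pos k with h0 | h0
      · subst h0; simp [encQ]
      rcases Nat.eq_or_lt_of_le hk with hkr | hkr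
      · subst hkr; rw [hg.Qr, hg'.Qr]
      · have hk1 : k - 1 < r - 1 := by omega
        have := congrFun hfeq ⟨k - 1, hk1⟩
        have h1 := (hfval p hp ⟨k - 1, hk1⟩)
        have h2 := (hfval p' hp' ⟨k - 1, hk1⟩)
        have hv : (fF p ⟨k - 1, hk1⟩ : ℕ) = (fF p' ⟨k - 1, hk1⟩ : ℕ) := by rw [this]
        rw [h1.1, h2.1] at hv
        simp only [show k - 1 + 1 = k by omega] at h1 h2 hv
        omega
    have hLeq : ∀ k, k < r → encL r p.1 p.2 k = encL r p'.1 p'.2 k := by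
      intro k hk
      have h1 := GoodSys.Qsucc (r := r) (a := p.1) (b := p.2) k
      have h2 := GoodSys.Qsucc (r := r) (a := p'.1) (b := p'.2) k
      have h3 := hQeq k (by omega)
      have h4 := hQeq (k + 1) (by omega)
      omega
    have hAeq : ∀ k, k < r → encA r p.1 k = encA r p'.1 k := by
      intro k hk
      have := congrFun hgeq ⟨k, hk⟩
      have h1 := hgval p hp ⟨k, hk⟩
      have h2 := hgval p' hp' ⟨k, hk⟩
      have hv : (gF p ⟨k, hk⟩ : ℕ) = (gF p' ⟨k, hk⟩ : ℕ) := by rw [this]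
      rw [h1.1, h2.1] at hv
      have h3 := hQeq k (by omega)
      simp only [] at h1 h2 hv
      omega
    have haeq : p.1 = p'.1 := by
      funext i
      have := hAeq (i : ℕ) i.isLt
      simpa [encA, i.isLt] using this
    have hbeq : p.2 = p'.2 := by
      funext i
      have h1 := hLeq (i : ℕ) i.isLt
      have h2 := hAeq (i : ℕ) i.isLt
      have h3 := hg.hab i
      have h4 := hg'.hab i
      simp only [encL, encA, dif_pos i.isLt, Fin.eta] at h1 h2
      omega
    exact Prod.ext haeq hbeq
  have hTfin : T.Finite := Set.toFinite T
  calc S.ncard ≤ T.ncard := Set.ncard_le_ncard_of_injOn F hmaps hinj hTfin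
    _ = Nat.choose (m - 1) (r - 1) * Nat.choose (n - m + r) r := by
      rw [← Nat.card_coe_set_eq]
      have e : ↥T ≃ ({s : Finset (Fin M) // s.card = r - 1} ×
          {t : Finset (Fin N) // t.card = r}) :=
        (Equiv.subtypeEquivRight (p := fun q : Finset (Fin M) × Finset (Fin N) => q ∈ T)
          (q := fun q => q.1.card = r - 1 ∧ q.2.card = r) (fun q => Iff.rfl)).trans
          (Equiv.subtypeProdEquivProd (p := fun s : Finset (Fin M) => s.card = r - 1)
            (q := fun t : Finset (Fin N) => t.card = r))
      rw [Nat.card_congr e, Nat.card_eq_fintype_card, Fintype.card_prod,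
        Fintype.card_finset_len, Fintype.card_finset_len, Fintype.card_fin, Fintype.card_fin]


lemma tildeC_goodsys {V : Type} {G : SimpleGraph V} {o : V} {n : ℕ} {v : Fin n → V}
    (hline : IsOddLine G o n v) {r m : ℕ} {C : Fin r → Set V}
    (hC : C ∈ tildeC G o v r m) :
    ∃ a b : Fin r → ℕ, GoodSys r m n a b ∧
      ∀ i, C i = v '' {k : Fin n | a i ≤ (k : ℕ) ∧ (k : ℕ) ≤ b i} := by
  obtain ⟨hcl, hdisj, hsum, hord⟩ := hC
  choose a b hab hbn hchar using fun i => aux_cluster_interval hline (hcl i).1 (hcl i).2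
  have hrepr : ∀ i, C i = v '' {k : Fin n | a i ≤ (k : ℕ) ∧ (k : ℕ) ≤ b i} := by
    intro i; ext x
    constructor
    · intro hx
      obtain ⟨k, hk⟩ := (hcl i).2 hx
      exact ⟨k, (hchar i k).1 (hk ▸ hx), hk⟩
    · rintro ⟨k, hk, rfl⟩
      exact (hchar i k).2 hk
  have hncard : ∀ i, (C i).ncard = b i - a i + 1 := by
    intro i
    rw [hrepr i, Set.ncard_image_of_injective _ hline.1]
    have himg : Fin.val '' {k : Fin n | a i ≤ (k : ℕ) ∧ (k : ℕ) ≤ b i}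
        = Set.Icc (a i) (b i) := by
      ext k
      simp only [Set.mem_image, Set.mem_setOf_eq, Set.mem_Icc]
      constructor
      · rintro ⟨kf, hkf, rfl⟩; exact hkf
      · rintro ⟨h1, h2⟩
        exact ⟨⟨k, by have := hbn i; omega⟩, ⟨h1, h2⟩, rfl⟩
    rw [← Set.ncard_image_of_injective _ Fin.val_injective, himg, ← Finset.coe_Icc,
      Set.ncard_coe_finset, Nat.card_Icc]
    have := hab i
    omega
  have hordeq : ∀ i, lineOrd v (C i) = b i := by
    intro i
    have hpre : (fun k : Fin n => (k : ℕ)) '' (v ⁻¹' C i) = Set.Icc (a i) (b i) := by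
      ext k
      simp only [Set.mem_image, Set.mem_preimage, Set.mem_Icc]
      constructor
      · rintro ⟨kf, hkf, rfl⟩; exact (hchar i kf).1 hkf
      · rintro ⟨h1, h2⟩
        exact ⟨⟨k, by have := hbn i; omega⟩, (hchar i _).2 ⟨h1, h2⟩, rfl⟩
    rw [lineOrd, hpre, csSup_Icc (hab i)]
  refine ⟨a, b, ⟨hab, hbn, ?_, ?_⟩, hrepr⟩
  · rw [← hsum]
    exact Finset.sum_congr rfl fun i _ => (hncard i).symm
  · intro i j hij
    have hbij : b i < b j := by
      have := hord i j hij
      rwa [hordeq i, hordeq j] at this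
    by_contra hcon
    push_neg at hcon
    have hm1 : v (⟨b i, hbn i⟩ : Fin n) ∈ C i := (hchar i _).2 ⟨hab i, le_refl _⟩
    have hm2 : v (⟨b i, hbn i⟩ : Fin n) ∈ C j := (hchar j _).2 ⟨hcon, le_of_lt hbij⟩
    exact absurd hm2 (Set.disjoint_left.mp (hdisj i j (ne_of_lt hij)) hm1)

/-- **Lemma.** On the infinite `d`-regular tree, if `A` is an odd line with `n`
vertices, then for all nonnegative integers `r, m`,
`|𝒞̃(A, r, m)| ≤ 2 · C(m-1, r-1) · C(n-m+r, r)`. -/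
theorem enumeration_lemma_line (d : ℕ) (hd : 3 ≤ d)
    (V : Type) (G : SimpleGraph V) (o : V)
    (hconn : G.Connected) (hacyc : G.IsAcyclic)
    (hreg : ∀ v : V, (G.neighborSet v).ncard = d)
    (n : ℕ) (hn : 1 ≤ n) (v : Fin n → V) (hline : IsOddLine G o n v)
    (r m : ℕ) :
    (tildeC G o v r m).ncard
      ≤ 2 * binomZ ((m : ℤ) - 1) ((r : ℤ) - 1) * binomZ ((n : ℤ) - m + r) (r : ℤ) := by
  classical
  rcases Nat.eq_zero_or_pos r with hr0 | hr
  · subst hr0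
    rcases Nat.eq_zero_or_pos m with hm0 | hm
    · subst hm0
      have htc : tildeC G o v 0 0 = Set.univ := by
        ext C
        simp only [tildeC, Set.mem_setOf_eq, Set.mem_univ, iff_true]
        exact ⟨fun i => i.elim0, fun i => i.elim0, by simp, fun i => i.elim0⟩
      have e1 : binomZ ((0 : ℕ) - 1 : ℤ) ((0 : ℕ) - 1 : ℤ) = 1 := by norm_num [binomZ]
      have e2 : binomZ ((n : ℤ) - (0 : ℕ) + (0 : ℕ)) ((0 : ℕ) : ℤ) = 1 := by
        rw [binomZ, if_neg (by omega), if_neg (by omega)]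
        simp
      rw [htc, Set.ncard_univ, Nat.card_unique, e1, e2]
      omega
    · have htc : tildeC G o v 0 m = ∅ := by
        ext C
        simp only [tildeC, Set.mem_setOf_eq, Set.mem_empty_iff_false, iff_false]
        rintro ⟨-, -, hsum, -⟩
        simp at hsum
        omega
      rw [htc, Set.ncard_empty]
      exact Nat.zero_le _
  · by_cases hgood : r ≤ m ∧ m ≤ n
    · obtain ⟨hrm, hmn⟩ := hgood
      have hex := fun (C : Fin r → Set V) (hC : C ∈ tildeC G o v r m) =>
        tildeC_goodsys hline hC
      choose aF bF hGS hrepr using hex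
      set Φ : (Fin r → Set V) → (Fin r → ℕ) × (Fin r → ℕ) :=
        fun C => if hC : C ∈ tildeC G o v r m then (aF C hC, bF C hC)
          else (fun _ => 0, fun _ => 0) with hPhi
      have hinj : Set.InjOn Φ (tildeC G o v r m) := by
        intro C hC C' hC' heq
        rw [hPhi] at heq
        simp only [dif_pos hC, dif_pos hC'] at heq
        have ha := congrArg Prod.fst heq
        have hb := congrArg Prod.snd heq
        simp only at ha hb
        funext i
        rw [hrepr C hC i, hrepr C' hC' i, ha, hb]
      have hS : ∀ p ∈ Φ '' tildeC G o v r m, GoodSys r m n p.1 p.2 := by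
        rintro p ⟨C, hC, rfl⟩
        rw [hPhi]
        simp only [dif_pos hC]
        exact hGS C hC
      have hcount := abstract_count hr hrm hmn (Φ '' tildeC G o v r m) hS
      rw [Set.ncard_image_of_injOn hinj] at hcount
      have e1 : binomZ ((m : ℤ) - 1) ((r : ℤ) - 1) = Nat.choose (m - 1) (r - 1) := by
        rw [binomZ, if_neg (by omega)]
        by_cases hlt : (m : ℤ) - 1 < (r : ℤ) - 1
        · rw [if_pos hlt, Nat.choose_eq_zero_of_lt (by omega)]
        · rw [if_neg hlt]
          congr 1 <;> omega
      have e2 : binomZ ((n : ℤ) - m + r) (r : ℤ) = Nat.choose (n - m + r) r := by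
        rw [binomZ, if_neg (by omega), if_neg (by omega)]
        congr 1 <;> omega
      rw [e1, e2]
      calc (tildeC G o v r m).ncard
          ≤ Nat.choose (m - 1) (r - 1) * Nat.choose (n - m + r) r := hcount
        _ ≤ 2 * Nat.choose (m - 1) (r - 1) * Nat.choose (n - m + r) r := by
            have : Nat.choose (m - 1) (r - 1) ≤ 2 * Nat.choose (m - 1) (r - 1) := by omega
            exact Nat.mul_le_mul_right _ this
    · have hempty : tildeC G o v r m = ∅ := by
        ext C
        simp only [Set.mem_empty_iff_false, iff_false]
        intro hC
        obtain ⟨a, b, hGS2, -⟩ := tildeC_goodsys hline hC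
        apply hgood
        constructor
        · have h1 := hGS2.Qlower r le_rfl
          rw [hGS2.Qr] at h1
          exact h1
        · have h1 := hGS2.Aupper (r - 1) 0 (by omega)
          have h0 : encQ r a b 0 = 0 := by simp [encQ]
          omega
      rw [hempty, Set.ncard_empty]
      exact Nat.zero_le _
end
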